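/- arXiv:1208.5522 — 2 statements merged into one kernel-verified Lean document; each statement's English description precedes it below -/
import Mathlib

section
/- Let X, Y be metric spaces, E ⊆ X × Y (with the maximum metric), and let A ⊆ X be a set such that the section E_x is nonempty for every x ∈ A. Then: (i) updim E ≥ updim A + inf_{x∈A} dpdim E_x; (ii) lpdim E ≥ lpdim A + inf_{x∈A} lpdim E_x; (iii) dpdim E ≥ dpdim A + inf_{x∈A} dpdim E_x. -/
open Filter MeasureTheory Set
open scoped ENNReal NNReal Topology

namespace ZPaper

variable {X : Type*} [MetricSpace X] {Y : Type*} [MetricSpace Y]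

/-- The `δ`-capacity of a set `E`: the supremum of cardinalities of subsets of `E`
whose points are mutually more than `δ` apart. -/
noncomputable def capacity (δ : ℝ) (E : Set X) : ℝ≥0∞ :=
  ⨆ (F : Finset X) (_ : ↑F ⊆ E ∧ ∀ x ∈ F, ∀ y ∈ F, x ≠ y → δ < dist x y),
    (F.card : ℝ≥0∞)

/-- Lower box (Minkowski) dimension: `liminf_{δ→0} log C_δ(E) / |log δ|`. -/
noncomputable def lbdim (E : Set X) : EReal :=
  Filter.liminf (fun δ : ℝ => (capacity δ E).log / ((|Real.log δ| : ℝ) : EReal)) (𝓝[>] (0:ℝ))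

/-- Upper box (Minkowski) dimension: `limsup_{δ→0} log C_δ(E) / |log δ|`. -/
noncomputable def ubdim (E : Set X) : EReal :=
  Filter.limsup (fun δ : ℝ => (capacity δ E).log / ((|Real.log δ| : ℝ) : EReal)) (𝓝[>] (0:ℝ))

/-- Upper packing dimension: infimum of `sup_n ubdim Eₙ` over countable covers of `E`. -/
noncomputable def updim (E : Set X) : EReal :=
  ⨅ (A : ℕ → Set X) (_ : E ⊆ ⋃ n, A n), ⨆ n, ubdim (A n)

/-- Lower packing dimension: infimum of `sup_n lbdim Eₙ` over countable covers of `E`. -/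
noncomputable def lpdim (E : Set X) : EReal :=
  ⨅ (A : ℕ → Set X) (_ : E ⊆ ⋃ n, A n), ⨆ n, lbdim (A n)

/-- Directed lower packing dimension: infimum of `sup_n lbdim Eₙ` over increasing
sequences with union `E`. -/
noncomputable def dpdim (E : Set X) : EReal :=
  ⨅ (A : ℕ → Set X) (_ : Monotone A ∧ (⋃ n, A n) = E), ⨆ n, lbdim (A n)

/-- A packing: a family of pairs (center, radius) with positive radii such that
`d(x_i, x_j) > r_i` for distinct members. -/
def IsPacking (π : Set (X × ℝ)) : Prop :=
  (∀ p ∈ π, 0 < p.2) ∧ ∀ p ∈ π, ∀ q ∈ π, p ≠ q → p.2 < dist p.1 q.1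

/-- A packing of a set `E`: all centers belong to `E`. -/
def IsPackingOf (π : Set (X × ℝ)) (E : Set X) : Prop :=
  IsPacking π ∧ ∀ p ∈ π, p.1 ∈ E

/-- A uniform packing: all radii equal. -/
def IsUniform (π : Set (X × ℝ)) : Prop := ∀ p ∈ π, ∀ q ∈ π, p.2 = q.2

/-- A scale: a set of positive reals with `0` in its closure. -/
def IsScale (Δ : Set ℝ) : Prop := Δ ⊆ Set.Ioi (0:ℝ) ∧ (0:ℝ) ∈ closure Δ

/-- A `(Δ,δ)`-packing of `E`: a packing of `E` with radii in `Δ ∩ (0, δ]`. -/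
def IsScaledPacking (Δ : Set ℝ) (δ : ℝ) (π : Set (X × ℝ)) (E : Set X) : Prop :=
  IsPackingOf π E ∧ ∀ p ∈ π, p.2 ∈ Δ ∧ p.2 ≤ δ

/-- `g(π) = Σ_i g(r_i)` for a packing `π`. -/
noncomputable def packVal (g : ℝ → ℝ) (π : Set (X × ℝ)) : ℝ≥0∞ :=
  ∑' p : π, ENNReal.ofReal (g p.1.2)

/-- `pack^g_{Δ,δ}(E) = sup{g(π) : π a (Δ,δ)-packing of E}`. -/
noncomputable def packPre (g : ℝ → ℝ) (Δ : Set ℝ) (δ : ℝ) (E : Set X) : ℝ≥0∞ :=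
  ⨆ (π : Set (X × ℝ)) (_ : IsScaledPacking Δ δ π E), packVal g π

/-- `pack^g_{Δ,0}(E) = inf_{δ>0} pack^g_{Δ,δ}(E)`. -/
noncomputable def packPre0 (g : ℝ → ℝ) (Δ : Set ℝ) (E : Set X) : ℝ≥0∞ :=
  ⨅ (δ : ℝ) (_ : 0 < δ), packPre g Δ δ E

/-- Uniform-packing (box) variant of `packPre`. -/
noncomputable def boxPre (g : ℝ → ℝ) (Δ : Set ℝ) (δ : ℝ) (E : Set X) : ℝ≥0∞ :=
  ⨆ (π : Set (X × ℝ)) (_ : IsScaledPacking Δ δ π E ∧ IsUniform π), packVal g π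

/-- `boxm^g_{Δ,0}(E) = inf_{δ>0} boxm^g_{Δ,δ}(E)`. -/
noncomputable def boxPre0 (g : ℝ → ℝ) (Δ : Set ℝ) (E : Set X) : ℝ≥0∞ :=
  ⨅ (δ : ℝ) (_ : 0 < δ), boxPre g Δ δ E

/-- Munroe's Method I construction. -/
noncomputable def methodI (τ : Set X → ℝ≥0∞) (E : Set X) : ℝ≥0∞ :=
  ⨅ (A : ℕ → Set X) (_ : E ⊆ ⋃ n, A n), ∑' n, τ (A n)

/-- The "directed" Method D construction. -/
noncomputable def methodD (τ : Set X → ℝ≥0∞) (E : Set X) : ℝ≥0∞ :=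
  ⨅ (A : ℕ → Set X) (_ : Monotone A ∧ (⋃ n, A n) = E), ⨆ n, τ (A n)

/-- The `Δ`-packing measure `pack^g_Δ` (Method I of `pack^g_{Δ,0}`). -/
noncomputable def packMeasure (g : ℝ → ℝ) (Δ : Set ℝ) : Set X → ℝ≥0∞ :=
  methodI (packPre0 g Δ)

/-- The `Δ`-box measure `boxm^g_Δ` (Method I of `boxm^g_{Δ,0}`). -/
noncomputable def boxMeasure (g : ℝ → ℝ) (Δ : Set ℝ) : Set X → ℝ≥0∞ :=
  methodI (boxPre0 g Δ)

/-- The upper packing pre-measure `upack^g_0 = pack^g_{(0,∞),0}`. -/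
noncomputable def upackPre0 (g : ℝ → ℝ) : Set X → ℝ≥0∞ :=
  packPre0 g (Set.Ioi (0:ℝ))

/-- The upper packing (= packing) measure `upack^g`. -/
noncomputable def upack (g : ℝ → ℝ) : Set X → ℝ≥0∞ :=
  methodI (upackPre0 g)

/-- The lower packing pre-measure `lpack^g_0(E) = inf_Δ pack^g_{Δ,0}(E)`. -/
noncomputable def lpackPre0 (g : ℝ → ℝ) (E : Set X) : ℝ≥0∞ :=
  ⨅ (Δ : Set ℝ) (_ : IsScale Δ), packPre0 g Δ E

/-- The lower packing measure `lpack^g`. -/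
noncomputable def lpack (g : ℝ → ℝ) : Set X → ℝ≥0∞ :=
  methodI (lpackPre0 g)

/-- The directed lower packing set function `dpack^g` (Method D of `lpack^g_0`). -/
noncomputable def dpack (g : ℝ → ℝ) : Set X → ℝ≥0∞ :=
  methodD (lpackPre0 g)

/-- The lower box (Hewitt–Stromberg) pre-measure `lboxm^g_0(E) = liminf_{δ→0} C_δ(E)·g(δ)`. -/
noncomputable def lboxPre0 (g : ℝ → ℝ) (E : Set X) : ℝ≥0∞ :=
  Filter.liminf (fun δ : ℝ => capacity δ E * ENNReal.ofReal (g δ)) (𝓝[>] (0:ℝ))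

/-- The upper box pre-measure `uboxm^g_0(E) = limsup_{δ→0} C_δ(E)·g(δ)`. -/
noncomputable def uboxPre0 (g : ℝ → ℝ) (E : Set X) : ℝ≥0∞ :=
  Filter.limsup (fun δ : ℝ => capacity δ E * ENNReal.ofReal (g δ)) (𝓝[>] (0:ℝ))

/-- The lower box (Hewitt–Stromberg) measure `lboxm^g`. -/
noncomputable def lbox (g : ℝ → ℝ) : Set X → ℝ≥0∞ := methodI (lboxPre0 g)

/-- The upper box measure `uboxm^g`. -/
noncomputable def ubox (g : ℝ → ℝ) : Set X → ℝ≥0∞ := methodI (uboxPre0 g)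

/-- The directed lower box set function `dboxm^g` (Method D of `lboxm^g_0`). -/
noncomputable def dbox (g : ℝ → ℝ) : Set X → ℝ≥0∞ := methodD (lboxPre0 g)

/-- A Hausdorff function: a nondecreasing positive function on `(0,∞)`. -/
def IsHausdorffFunction (g : ℝ → ℝ) : Prop :=
  MonotoneOn g (Set.Ioi (0:ℝ)) ∧ ∀ r : ℝ, 0 < r → 0 < g r

/-- `f ≺ g`: `lim_{r→0⁺} f(r)/g(r) = 0`. -/
def HPrec (f g : ℝ → ℝ) : Prop :=
  Tendsto (fun r => f r / g r) (𝓝[>] (0:ℝ)) (𝓝 0)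

/-- The section `E_x = {y : (x,y) ∈ E}` of a set `E ⊆ X × Y`. -/
def sect (E : Set (X × Y)) (x : X) : Set Y := {y | (x, y) ∈ E}

/-- The integral of a nonnegative function against a set function, via the usual
supremum over Borel simple functions (for a Borel measure this is the Lebesgue integral). -/
noncomputable def sLintegral (τ : Set X → ℝ≥0∞) (f : X → ℝ≥0∞) : ℝ≥0∞ :=
  letI := borel X
  ⨆ (s : SimpleFunc X ℝ≥0∞) (_ : ∀ x, s x ≤ f x), ∑ y ∈ s.range, y * τ (⇑s ⁻¹' {y})

/-- The upper integral `∫* f dτ = inf{∫ φ dτ : φ ≥ f Borel measurable}`. -/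
noncomputable def upperIntegral (τ : Set X → ℝ≥0∞) (f : X → ℝ≥0∞) : ℝ≥0∞ :=
  letI := borel X
  ⨅ (φ : X → ℝ≥0∞) (_ : ∀ x, f x ≤ φ x) (_ : Measurable φ), sLintegral τ φ

/-- `(Q,m)`-homogeneity of a set `A`: `C_r(E) ≤ Q (diam E / r)^m` for all `E ⊆ A`
and all `0 < r ≤ diam E`. -/
def IsHomog (Q m : ℝ) (A : Set X) : Prop :=
  ∀ E : Set X, E ⊆ A → ∀ r : ℝ, 0 < r → ENNReal.ofReal r ≤ EMetric.diam E →
    capacity r E ≤ ENNReal.ofReal Q * (EMetric.diam E / ENNReal.ofReal r) ^ m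

/-- The Assouad dimension of a set. -/
noncomputable def adim (A : Set X) : ℝ≥0∞ :=
  ⨅ (m : ℝ) (_ : 0 < m ∧ ∃ Q : ℝ, 0 ≤ Q ∧ IsHomog Q m A), ENNReal.ofReal m

/-- The countably stable modification of the Assouad dimension. -/
noncomputable def sadim (A : Set X) : ℝ≥0∞ :=
  ⨅ (S : ℕ → Set X) (_ : A ⊆ ⋃ n, S n), ⨆ n, adim (S n)

/-- The upper packing dimension of a Borel measure. -/
noncomputable def updimM {Z : Type*} [MetricSpace Z] [MeasurableSpace Z]
    (μ : Measure Z) : EReal :=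
  ⨅ (E : Set Z) (_ : MeasurableSet[borel Z] E ∧ 0 < μ E), updim E

/-- The lower packing dimension of a Borel measure. -/
noncomputable def lpdimM {Z : Type*} [MetricSpace Z] [MeasurableSpace Z]
    (μ : Measure Z) : EReal :=
  ⨅ (E : Set Z) (_ : MeasurableSet[borel Z] E ∧ 0 < μ E), lpdim E

/-- Euclidean space `ℝ^m`. -/
abbrev Euc (m : ℕ) := EuclideanSpace ℝ (Fin m)

end ZPaper
open Filter MeasureTheory Set ZPaper
open scoped ENNReal NNReal Topology

/-!
Fix reals `a < dim A` and `b` below the dimension of the sections. If for every `x` in a set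
`A'` the section `E_x` carries `δ^{-b}` points that are `δ`-separated at all scales
`δ < 1/(m+1)`, then stacking these above a `δ`-separated subset of `A'` gives a `δ`-separated
subset of `E` for the maximum metric, so `C_δ(A') · δ^{-b} ≤ C_δ(E)`; for box dimensions this
yields `dim A' + b ≤ dim E`. For packing dimensions, given a cover `(Cₙ)` of `E`, the sets
`{x ∈ A | the section of Cₙ is large below scale 1/(m+1)}` cover `A` as `n, m` vary (and are
increasing along the diagonal in the directed case), so one of them has dimension `> a`. For
`updim` the sections of the pieces must exhaust `E_x` increasingly, so `(Cₙ)` is replaced by its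
partial unions, and finite stability of `ubdim` returns to the original pieces.
-/

namespace ZPaper

variable {X Y : Type*}

lemma sect_eq_preimage (E : Set (X × Y)) (x : X) : sect E x = Prod.mk x ⁻¹' E := rfl

section Capacity

variable [MetricSpace X]

lemma le_capacity {δ : ℝ} {E : Set X} (F : Finset X) (hFE : ↑F ⊆ E)
    (hF : (F : Set X).Pairwise (δ < dist · ·)) : (F.card : ℝ≥0∞) ≤ capacity δ E :=
  le_iSup₂_of_le F ⟨hFE, fun _ hx _ hy hxy => hF hx hy hxy⟩ le_rfl

lemma exists_finset_of_lt_capacity {δ : ℝ} {E : Set X} {d : ℝ≥0∞} (h : d < capacity δ E) :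
    ∃ F : Finset X, ↑F ⊆ E ∧ (F : Set X).Pairwise (δ < dist · ·) ∧ d < F.card := by
  obtain ⟨F, hF⟩ := lt_iSup_iff.1 h
  obtain ⟨⟨hFE, hF⟩, hd⟩ := lt_iSup_iff.1 hF
  exact ⟨F, hFE, fun x hx y hy hxy => hF x hx y hy hxy, hd⟩

lemma capacity_le_of_forall {δ : ℝ} {E : Set X} {c : ℝ≥0∞}
    (h : ∀ F : Finset X, ↑F ⊆ E → (F : Set X).Pairwise (δ < dist · ·) →
      (F.card : ℝ≥0∞) ≤ c) :
    capacity δ E ≤ c :=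
  iSup₂_le fun F hF => h F hF.1 fun _ hx _ hy hxy => hF.2 _ hx _ hy hxy

lemma capacity_mono {δ : ℝ} {E E' : Set X} (h : E ⊆ E') : capacity δ E ≤ capacity δ E' :=
  capacity_le_of_forall fun F hFE hF => le_capacity F (hFE.trans h) hF

lemma capacity_union_le (δ : ℝ) (S T : Set X) :
    capacity δ (S ∪ T) ≤ capacity δ S + capacity δ T := by
  classical
  refine capacity_le_of_forall fun F hFE hF => ?_
  have hS : ((F.filter (· ∈ S)).card : ℝ≥0∞) ≤ capacity δ S :=
    le_capacity _ (fun x hx => (Finset.mem_filter.1 hx).2)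
      (hF.mono (Finset.coe_subset.2 (Finset.filter_subset _ _)))
  have hT : ((F.filter (· ∉ S)).card : ℝ≥0∞) ≤ capacity δ T := by
    refine le_capacity _ (fun x hx => ?_) (hF.mono (Finset.coe_subset.2 (Finset.filter_subset _ _)))
    obtain ⟨hxF, hxS⟩ := Finset.mem_filter.1 hx
    exact (hFE hxF).resolve_left hxS
  calc (F.card : ℝ≥0∞)
      = (F.filter (· ∈ S)).card + (F.filter (· ∉ S)).card := by
        rw [← Nat.cast_add, Finset.card_filter_add_card_filter_not]
    _ ≤ capacity δ S + capacity δ T := add_le_add hS hT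

end Capacity

section BoxDimension

variable [MetricSpace X]

lemma le_div_abs_log_iff {δ : ℝ} (h0 : 0 < δ) (h1 : δ < 1) {s : ℝ} {C : ℝ≥0∞} :
    (s : EReal) ≤ C.log / ((|Real.log δ| : ℝ) : EReal) ↔
      ENNReal.ofReal (δ ^ (-s)) ≤ C := by
  have hlog : Real.log δ < 0 := Real.log_neg h0 h1
  have hL : (0:ℝ) < |Real.log δ| := abs_pos.2 hlog.ne
  rw [EReal.le_div_iff_mul_le (by exact_mod_cast hL) (by simp), ← EReal.coe_mul]
  have hs : s * |Real.log δ| = Real.log (δ ^ (-s)) := by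
    rw [Real.log_rpow h0, abs_of_neg hlog]; ring
  rw [hs, ← ENNReal.log_ofReal_of_pos (Real.rpow_pos_of_pos h0 _), ENNReal.log_le_log_iff]

lemma eventually_mem_Ioo_zero_one : ∀ᶠ δ in 𝓝[>] (0:ℝ), δ ∈ Ioo (0:ℝ) 1 :=
  Ioo_mem_nhdsGT one_pos

lemma le_lbdim_of_eventually {S : Set X} {s : ℝ}
    (h : ∀ᶠ δ in 𝓝[>] (0:ℝ), ENNReal.ofReal (δ ^ (-s)) ≤ capacity δ S) :
    (s : EReal) ≤ lbdim S := by
  refine le_liminf_of_le (by isBoundedDefault) ?_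
  filter_upwards [h, eventually_mem_Ioo_zero_one] with δ hc hδ
  exact (le_div_abs_log_iff hδ.1 hδ.2).2 hc

lemma eventually_of_lt_lbdim {S : Set X} {s : ℝ} (h : (s : EReal) < lbdim S) :
    ∀ᶠ δ in 𝓝[>] (0:ℝ), ENNReal.ofReal (δ ^ (-s)) ≤ capacity δ S := by
  filter_upwards [eventually_lt_of_lt_liminf h, eventually_mem_Ioo_zero_one] with δ hlt hδ
  exact (le_div_abs_log_iff hδ.1 hδ.2).1 hlt.le

lemma le_ubdim_of_frequently {S : Set X} {s : ℝ}
    (h : ∃ᶠ δ in 𝓝[>] (0:ℝ), ENNReal.ofReal (δ ^ (-s)) ≤ capacity δ S) :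
    (s : EReal) ≤ ubdim S := by
  refine le_limsup_of_frequently_le ?_
  refine (h.and_eventually eventually_mem_Ioo_zero_one).mono fun δ ⟨hc, hδ⟩ => ?_
  exact (le_div_abs_log_iff hδ.1 hδ.2).2 hc

lemma frequently_of_lt_ubdim {S : Set X} {s : ℝ} (h : (s : EReal) < ubdim S) :
    ∃ᶠ δ in 𝓝[>] (0:ℝ), ENNReal.ofReal (δ ^ (-s)) ≤ capacity δ S := by
  refine ((frequently_lt_of_lt_limsup (by isBoundedDefault) h).and_eventually
    eventually_mem_Ioo_zero_one).mono fun δ ⟨hlt, hδ⟩ => ?_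
  exact (le_div_abs_log_iff hδ.1 hδ.2).1 hlt.le

lemma updim_le_iSup_ubdim {E : Set X} {C : ℕ → Set X} (h : E ⊆ ⋃ n, C n) :
    updim E ≤ ⨆ n, ubdim (C n) :=
  iInf₂_le C h

lemma lpdim_le_iSup_lbdim {E : Set X} {C : ℕ → Set X} (h : E ⊆ ⋃ n, C n) :
    lpdim E ≤ ⨆ n, lbdim (C n) :=
  iInf₂_le C h

lemma dpdim_le_iSup_lbdim {E : Set X} {C : ℕ → Set X} (hC : Monotone C)
    (h : ⋃ n, C n = E) :
    dpdim E ≤ ⨆ n, lbdim (C n) :=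
  iInf₂_le C ⟨hC, h⟩

lemma eventually_mul_rpow_neg_le {s t : ℝ} (hst : s < t) (K : ℝ) :
    ∀ᶠ δ in 𝓝[>] (0:ℝ), K * δ ^ (-s) ≤ δ ^ (-t) := by
  have hlarge := tendsto_rpow_neg_nhdsGT_zero (by linarith : -(t - s) < 0)
  filter_upwards [hlarge.eventually_ge_atTop K, self_mem_nhdsWithin] with δ hK (hδ : 0 < δ)
  calc K * δ ^ (-s) ≤ δ ^ (-(t - s)) * δ ^ (-s) := by gcongr
    _ = δ ^ (-t) := by rw [← Real.rpow_add hδ]; ring_nf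

lemma ubdim_union_le (S T : Set X) : ubdim (S ∪ T) ≤ max (ubdim S) (ubdim T) := by
  refine EReal.ge_of_forall_gt_iff_ge.1 fun s hs => ?_
  obtain ⟨t, hst, ht⟩ := EReal.lt_iff_exists_real_btwn.1 hs
  have hfreq : ∃ᶠ δ in 𝓝[>] (0:ℝ), ENNReal.ofReal (δ ^ (-s)) ≤ capacity δ S ∨
      ENNReal.ofReal (δ ^ (-s)) ≤ capacity δ T := by
    refine ((frequently_of_lt_ubdim ht).and_eventually
      (eventually_mul_rpow_neg_le (EReal.coe_lt_coe_iff.1 hst) 2)).mono fun δ ⟨hcap, h2⟩ => ?_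
    by_contra! hlt
    have hlarge : 2 * ENNReal.ofReal (δ ^ (-s)) ≤ capacity δ (S ∪ T) := by
      rw [← ENNReal.ofReal_ofNat 2, ← ENNReal.ofReal_mul zero_le_two]
      exact (ENNReal.ofReal_le_ofReal h2).trans hcap
    exact (hlarge.trans (capacity_union_le δ S T)).not_gt
      (two_mul (ENNReal.ofReal (δ ^ (-s))) ▸ ENNReal.add_lt_add hlt.1 hlt.2)
  rcases frequently_or_distrib.1 hfreq with h | h
  · exact (le_ubdim_of_frequently h).trans (le_max_left _ _)
  · exact (le_ubdim_of_frequently h).trans (le_max_right _ _)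

lemma ubdim_accumulate_le (C : ℕ → Set X) (n : ℕ) :
    ubdim (accumulate C n) ≤ ⨆ i, ubdim (C i) := by
  induction n with
  | zero => rw [accumulate_zero_nat]; exact le_iSup (fun i => ubdim (C i)) 0
  | succ n ih =>
    rw [accumulate_succ]
    exact (ubdim_union_le _ _).trans (max_le ih (le_iSup (fun i => ubdim (C i)) (n + 1)))

end BoxDimension

section LargeSections

variable [MetricSpace Y]

def largeSections (S : Set (X × Y)) (b : ℝ) (m : ℕ) : Set X :=
  {x | ∀ δ ∈ Ioo (0:ℝ) (1 / (m + 1)), ENNReal.ofReal (δ ^ (-b)) ≤ capacity δ (sect S x)}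

lemma largeSections_mono {S S' : Set (X × Y)} {b : ℝ} {m m' : ℕ} (hS : S ⊆ S')
    (hm : m ≤ m') :
    largeSections S b m ⊆ largeSections S' b m' := by
  intro x hx δ hδ
  have hle : (1:ℝ) / (m' + 1) ≤ 1 / (m + 1) := by gcongr
  exact (hx δ ⟨hδ.1, hδ.2.trans_le hle⟩).trans (capacity_mono fun y hy => hS hy)

lemma exists_mem_largeSections {S : Set (X × Y)} {x : X} {b : ℝ}
    (h : (b : EReal) < lbdim (sect S x)) : ∃ m, x ∈ largeSections S b m := by
  obtain ⟨ε, hε, hevε⟩ := (nhdsGT_basis (0:ℝ)).eventually_iff.1 (eventually_of_lt_lbdim h)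
  obtain ⟨m, hm⟩ := exists_nat_one_div_lt hε
  exact ⟨m, fun δ hδ => hevε ⟨hδ.1, hδ.2.trans hm⟩⟩

lemma subset_iUnion_inter_largeSections {T : ℕ → Set (X × Y)} {A : Set X} {b : ℝ}
    (h : ∀ x ∈ A, ∃ n, (b : EReal) < lbdim (sect (T n) x)) :
    A ⊆ ⋃ j : ℕ, A ∩ largeSections (T j.unpair.1) b j.unpair.2 := by
  intro x hx
  obtain ⟨n, hn⟩ := h x hx
  obtain ⟨m, hm⟩ := exists_mem_largeSections hn
  exact mem_iUnion.2 ⟨Nat.pair n m, hx, by rwa [Nat.unpair_pair]⟩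

lemma iUnion_inter_largeSections_eq {T : ℕ → Set (X × Y)} (hT : Monotone T) {A : Set X}
    {b : ℝ}
    (h : ∀ x ∈ A, ∃ n, (b : EReal) < lbdim (sect (T n) x)) :
    ⋃ j, A ∩ largeSections (T j) b j = A := by
  refine subset_antisymm (iUnion_subset fun _ => inter_subset_left) fun x hx => ?_
  obtain ⟨n, hn⟩ := h x hx
  obtain ⟨m, hm⟩ := exists_mem_largeSections hn
  exact mem_iUnion.2 ⟨max n m, hx,
    largeSections_mono (hT (le_max_left n m)) (le_max_right n m) hm⟩

lemma exists_lt_lbdim_sect_of_lt_lpdim {E : Set (X × Y)} {T : ℕ → Set (X × Y)}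
    (hE : E ⊆ ⋃ n, T n) {x : X} {b : ℝ} (h : (b : EReal) < lpdim (sect E x)) :
    ∃ n, (b : EReal) < lbdim (sect (T n) x) := by
  have hcov : sect E x ⊆ ⋃ n, sect (T n) x := by
    simp only [sect_eq_preimage, ← preimage_iUnion]
    exact preimage_mono hE
  exact lt_iSup_iff.1 (h.trans_le (lpdim_le_iSup_lbdim hcov))

lemma exists_lt_lbdim_sect_of_lt_dpdim {E : Set (X × Y)} {T : ℕ → Set (X × Y)}
    (hT : Monotone T) (hTE : ⋃ n, T n = E) {x : X} {b : ℝ}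
    (h : (b : EReal) < dpdim (sect E x)) :
    ∃ n, (b : EReal) < lbdim (sect (T n) x) := by
  have hexh : Monotone (fun n => sect (T n) x) ∧ ⋃ n, sect (T n) x = sect E x := by
    refine ⟨fun _ _ hmn => preimage_mono (hT hmn), ?_⟩
    simp only [sect_eq_preimage, ← preimage_iUnion, hTE]
  exact lt_iSup_iff.1 (h.trans_le (dpdim_le_iSup_lbdim hexh.1 hexh.2))

end LargeSections

section Products

variable [MetricSpace X] [MetricSpace Y]

lemma sum_card_le_capacity {δ : ℝ} {S : Set (X × Y)} (F : Finset X)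
    (hF : (F : Set X).Pairwise (δ < dist · ·)) (G : X → Finset Y)
    (hGS : ∀ x ∈ F, ↑(G x) ⊆ sect S x)
    (hG : ∀ x ∈ F, (G x : Set Y).Pairwise (δ < dist · ·)) :
    ((∑ x ∈ F, (G x).card : ℕ) : ℝ≥0∞) ≤ capacity δ S := by
  set H : Finset (X × Y) := (F.sigma G).map (Equiv.sigmaEquivProd X Y).toEmbedding
  have hmem : ∀ p, p ∈ H ↔ p.1 ∈ F ∧ p.2 ∈ G p.1 := fun p => by simp [H]
  have hcard : H.card = ∑ x ∈ F, (G x).card := by simp [H]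
  rw [← hcard]
  refine le_capacity H (fun p hp => ?_) fun p hp q hq hpq => ?_
  · obtain ⟨h1, h2⟩ := (hmem p).1 hp
    exact hGS _ h1 h2
  · obtain ⟨hp1, hp2⟩ := (hmem p).1 hp
    obtain ⟨hq1, hq2⟩ := (hmem q).1 hq
    rw [Prod.dist_eq]
    by_cases hx : p.1 = q.1
    · have hy : p.2 ≠ q.2 := fun hy => hpq (Prod.ext hx hy)
      rw [← hx] at hq2
      exact (hG _ hp1 hp2 hq2 hy).trans_le (le_max_right _ _)
    · exact (hF hp1 hq1 hx).trans_le (le_max_left _ _)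

lemma capacity_mul_le_capacity_of_le_sect {δ : ℝ} {S : Set (X × Y)} {A : Set X} {c : ℝ≥0∞}
    (h : ∀ x ∈ A, c ≤ capacity δ (sect S x)) : capacity δ A * c ≤ capacity δ S := by
  refine ENNReal.mul_le_of_forall_lt fun a ha d hd => ?_
  obtain ⟨F, hFA, hF, haF⟩ := exists_finset_of_lt_capacity ha
  have hG : ∀ x ∈ F, ∃ G : Finset Y,
      ↑G ⊆ sect S x ∧ (G : Set Y).Pairwise (δ < dist · ·) ∧ d < G.card :=
    fun x hx => exists_finset_of_lt_capacity (hd.trans_le (h x (hFA hx)))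
  choose! G hGS hG hdG using hG
  calc a * d ≤ F.card * d := by gcongr
    _ = ∑ _x ∈ F, d := by rw [Finset.sum_const, nsmul_eq_mul]
    _ ≤ ∑ x ∈ F, ((G x).card : ℝ≥0∞) := Finset.sum_le_sum fun x hx => (hdG x hx).le
    _ ≤ capacity δ S := by
      rw [← Nat.cast_sum]
      exact sum_card_le_capacity F hF G hGS hG

lemma rpow_le_capacity_of_subset_largeSections {S : Set (X × Y)} {A : Set X} {a b : ℝ} {m : ℕ}
    (hA : A ⊆ largeSections S b m) {δ : ℝ} (hδ : δ ∈ Ioo (0:ℝ) (1 / (m + 1)))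
    (hcap : ENNReal.ofReal (δ ^ (-a)) ≤ capacity δ A) :
    ENNReal.ofReal (δ ^ (-(a + b))) ≤ capacity δ S :=
  calc ENNReal.ofReal (δ ^ (-(a + b)))
      = ENNReal.ofReal (δ ^ (-a)) * ENNReal.ofReal (δ ^ (-b)) := by
        rw [neg_add, Real.rpow_add hδ.1, ENNReal.ofReal_mul (Real.rpow_nonneg hδ.1.le _)]
    _ ≤ capacity δ A * ENNReal.ofReal (δ ^ (-b)) := by gcongr
    _ ≤ capacity δ S := capacity_mul_le_capacity_of_le_sect fun x hx => hA hx δ hδ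

lemma add_le_lbdim_of_subset_largeSections {S : Set (X × Y)} {A : Set X} {a b : ℝ} {m : ℕ}
    (hA : A ⊆ largeSections S b m) (ha : (a : EReal) < lbdim A) :
    ((a + b : ℝ) : EReal) ≤ lbdim S := by
  refine le_lbdim_of_eventually ?_
  filter_upwards [eventually_of_lt_lbdim ha,
    Ioo_mem_nhdsGT (by positivity : (0:ℝ) < 1 / (m + 1))] with δ hcap hδ
  exact rpow_le_capacity_of_subset_largeSections hA hδ hcap

lemma add_le_ubdim_of_subset_largeSections {S : Set (X × Y)} {A : Set X} {a b : ℝ} {m : ℕ}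
    (hA : A ⊆ largeSections S b m) (ha : (a : EReal) < ubdim A) :
    ((a + b : ℝ) : EReal) ≤ ubdim S :=
  le_ubdim_of_frequently <| ((frequently_of_lt_ubdim ha).and_eventually
    (Ioo_mem_nhdsGT (by positivity : (0:ℝ) < 1 / (m + 1)))).mono fun _ ⟨hcap, hδ⟩ =>
      rpow_le_capacity_of_subset_largeSections hA hδ hcap

variable {E : Set (X × Y)} {A : Set X} {a b : ℝ}

lemma add_le_lpdim (hb : ∀ x ∈ A, (b : EReal) < lpdim (sect E x)) (ha : (a : EReal) < lpdim A) :
    ((a + b : ℝ) : EReal) ≤ lpdim E := by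
  refine le_iInf₂ fun C hC => ?_
  have hcov := subset_iUnion_inter_largeSections fun x hx =>
    exists_lt_lbdim_sect_of_lt_lpdim hC (hb x hx)
  obtain ⟨j, hj⟩ := lt_iSup_iff.1 (ha.trans_le (lpdim_le_iSup_lbdim hcov))
  exact (add_le_lbdim_of_subset_largeSections inter_subset_right hj).trans
    (le_iSup (fun n => lbdim (C n)) _)

lemma add_le_dpdim (hb : ∀ x ∈ A, (b : EReal) < dpdim (sect E x)) (ha : (a : EReal) < dpdim A) :
    ((a + b : ℝ) : EReal) ≤ dpdim E := by
  refine le_iInf₂ fun C ⟨hC, hCE⟩ => ?_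
  have hlarge := fun x hx => exists_lt_lbdim_sect_of_lt_dpdim hC hCE (hb x hx)
  have hmono : Monotone fun j => A ∩ largeSections (C j) b j := fun _ _ hij =>
    inter_subset_inter_right _ (largeSections_mono (hC hij) hij)
  obtain ⟨j, hj⟩ := lt_iSup_iff.1
    (ha.trans_le (dpdim_le_iSup_lbdim hmono (iUnion_inter_largeSections_eq hC hlarge)))
  exact (add_le_lbdim_of_subset_largeSections inter_subset_right hj).trans
    (le_iSup (fun n => lbdim (C n)) _)

lemma add_le_updim (hb : ∀ x ∈ A, (b : EReal) < dpdim (sect E x)) (ha : (a : EReal) < updim A) :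
    ((a + b : ℝ) : EReal) ≤ updim E := by
  refine le_iInf₂ fun C hC => ?_
  set T : ℕ → Set (X × Y) := fun n => E ∩ accumulate C n
  have hT : Monotone T := fun _ _ hmn => inter_subset_inter_right _ (monotone_accumulate hmn)
  have hTE : ⋃ n, T n = E := by
    simp only [T, ← inter_iUnion, iUnion_accumulate, inter_eq_left.2 hC]
  have hcov := subset_iUnion_inter_largeSections fun x hx =>
    exists_lt_lbdim_sect_of_lt_dpdim hT hTE (hb x hx)
  obtain ⟨j, hj⟩ := lt_iSup_iff.1 (ha.trans_le (updim_le_iSup_ubdim hcov))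
  have hsub : A ∩ largeSections (T j.unpair.1) b j.unpair.2 ⊆
      largeSections (accumulate C j.unpair.1) b j.unpair.2 :=
    inter_subset_right.trans (largeSections_mono inter_subset_right le_rfl)
  exact (add_le_ubdim_of_subset_largeSections hsub hj).trans (ubdim_accumulate_le C _)

end Products

lemma add_le_of_forall_coe_lt {x y z : EReal}
    (h : ∀ a b : ℝ, (a : EReal) < x → (b : EReal) < y → ((a + b : ℝ) : EReal) ≤ z) :
    x + y ≤ z := by
  refine EReal.add_le_of_forall_lt fun a ha b hb => ?_
  induction a using EReal.rec with
  | bot => exact EReal.bot_add b ▸ bot_le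
  | top => exact absurd ha not_top_lt
  | coe a =>
    induction b using EReal.rec with
    | bot => exact EReal.add_bot (a : EReal) ▸ bot_le
    | top => exact absurd hb not_top_lt
    | coe b => exact EReal.coe_add a b ▸ h a b ha hb

end ZPaper

theorem stmt3_general {X Y : Type*} [MetricSpace X] [MetricSpace Y] (E : Set (X × Y)) (A : Set X) :
    (updim E ≥ updim A + ⨅ x ∈ A, dpdim (sect E x)) ∧
    (lpdim E ≥ lpdim A + ⨅ x ∈ A, lpdim (sect E x)) ∧
    (dpdim E ≥ dpdim A + ⨅ x ∈ A, dpdim (sect E x)) := by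
  refine ⟨?_, ?_, ?_⟩ <;> refine add_le_of_forall_coe_lt fun a b ha hb => ?_
  · exact add_le_updim (fun x hx => hb.trans_le (iInf₂_le x hx)) ha
  · exact add_le_lpdim (fun x hx => hb.trans_le (iInf₂_le x hx)) ha
  · exact add_le_dpdim (fun x hx => hb.trans_le (iInf₂_le x hx)) ha

/-- Theorem `dim:sections`. Let `E ⊆ X × Y` and `A ⊆ X` with all
sections `E_x`, `x ∈ A`, nonempty. Then
(i) `updim E ≥ updim A + inf_{x∈A} dpdim E_x`;
(ii) `lpdim E ≥ lpdim A + inf_{x∈A} lpdim E_x`;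
(iii) `dpdim E ≥ dpdim A + inf_{x∈A} dpdim E_x`. -/
theorem stmt3 {X Y : Type*} [MetricSpace X] [MetricSpace Y] (E : Set (X × Y)) (A : Set X)
    (hA : ∀ x ∈ A, (sect E x).Nonempty) :
    (updim E ≥ updim A + ⨅ x ∈ A, dpdim (sect E x)) ∧
    (lpdim E ≥ lpdim A + ⨅ x ∈ A, lpdim (sect E x)) ∧
    (dpdim E ≥ dpdim A + ⨅ x ∈ A, dpdim (sect E x)) :=
  stmt3_general E A
end

section
/- Let X, Y be metric spaces, g, h Hausdorff functions and Δ a scale. For any set E ⊆ X × Y, pack^{gh}_{Δ,0}(E) ≥ pack^h_Δ(X) · inf_{x∈X} lboxm^g_0(E_x). -/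
open Filter MeasureTheory Set
open scoped ENNReal NNReal Topology

open Filter MeasureTheory Set ZPaper
open scoped ENNReal NNReal Topology

/-! Fix `c < inf_x lboxm^g_0(E_x)`. The sets `S_n` of points `x` with `C_r(E_x) g(r) > c` for all
`r ≤ 1/(n+1)` increase to `X`. Over a fine packing `{(x_i, r_i)}` of `S_n`, an `r_i`-separated set
of more than `c / g(r_i)` points `y` of each section `E_{x_i}` gives balls `((x_i, y), r_i)` forming
a packing of `E` for the maximum metric, so `pack^h_{Δ,0}(S_n) · c ≤ pack^{gh}_{Δ,0}(E)`. Finally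
`pack^h_Δ` is a metric outer measure, hence continuous from below along the closed sets
`closure S_n`, and `pack^h_{Δ,0}` does not see closures, so `pack^h_Δ(X) ≤ sup_n pack^h_{Δ,0}(S_n)`.
-/

lemma ENNReal.ofReal_mul_ofReal_le (a b : ℝ) :
    ENNReal.ofReal a * ENNReal.ofReal b ≤ ENNReal.ofReal (a * b) := by
  rcases le_or_gt 0 a with ha | ha
  · rw [ENNReal.ofReal_mul ha]
  · simp [ENNReal.ofReal_of_nonpos ha.le]

lemma exists_nat_forall_lt_of_lt_liminf_nhdsGT {β : Type*} [CompleteLinearOrder β]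
    {f : ℝ → β} {c : β} (hc : c < liminf f (𝓝[>] 0)) :
    ∃ n : ℕ, ∀ r : ℝ, 0 < r → r ≤ 1 / ((n : ℝ) + 1) → c < f r := by
  obtain ⟨u, hu, hIoo⟩ := mem_nhdsGT_iff_exists_Ioo_subset.1 (eventually_lt_of_lt_liminf hc)
  obtain ⟨n, hn⟩ := exists_nat_one_div_lt (mem_Ioi.1 hu)
  exact ⟨n, fun r hr hrn => hIoo ⟨hr, hrn.trans_lt hn⟩⟩

namespace ZPaper

variable {X : Type*} [MetricSpace X] {Y : Type*} [MetricSpace Y]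
  {g h : ℝ → ℝ} {Δ : Set ℝ} {δ δ' : ℝ} {A B : Set X} {π : Set (X × ℝ)}

lemma packVal_le_packPre (hπ : IsScaledPacking Δ δ π A) : packVal g π ≤ packPre g Δ δ A :=
  le_iSup₂ (f := fun π (_ : IsScaledPacking Δ δ π A) => packVal g π) π hπ

lemma packPre_mono (hAB : A ⊆ B) (hδ : δ ≤ δ') : packPre g Δ δ A ≤ packPre g Δ δ' B :=
  iSup₂_le fun _ hπ => packVal_le_packPre
    ⟨⟨hπ.1.1, fun p hp => hAB (hπ.1.2 p hp)⟩, fun p hp => ⟨(hπ.2 p hp).1, (hπ.2 p hp).2.trans hδ⟩⟩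

lemma packPre0_le_packPre (hδ : 0 < δ) : packPre0 g Δ A ≤ packPre g Δ δ A :=
  iInf₂_le δ hδ

lemma packPre0_mono (hAB : A ⊆ B) : packPre0 g Δ A ≤ packPre0 g Δ B :=
  le_iInf₂ fun _ hδ => (packPre0_le_packPre hδ).trans (packPre_mono hAB le_rfl)

lemma packPre0_empty : packPre0 g Δ (∅ : Set X) = 0 := by
  refine le_antisymm ((packPre0_le_packPre one_pos).trans (iSup₂_le fun π hπ => ?_)) bot_le
  rw [eq_empty_of_forall_notMem fun p hp => hπ.1.2 p hp]
  simp [packVal]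

/-- Separation forces `e` to be injective, so the sum is the `g`-value of the packing `range e`. -/
lemma tsum_ofReal_le_packPre {ι : Type*} {e : ι → X × ℝ} (hpos : ∀ i, 0 < (e i).2)
    (hsep : ∀ i j, i ≠ j → (e i).2 < dist (e i).1 (e j).1) (hmem : ∀ i, (e i).1 ∈ A)
    (hrad : ∀ i, (e i).2 ∈ Δ ∧ (e i).2 ≤ δ) :
    ∑' i, ENNReal.ofReal (g (e i).2) ≤ packPre g Δ δ A := by
  have he : Function.Injective e := fun i j hij => by
    by_contra hne
    have := hsep i j hne
    rw [hij, dist_self] at this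
    exact this.not_ge (hpos j).le
  rw [← tsum_range (fun p : X × ℝ => ENNReal.ofReal (g p.2)) he]
  refine packVal_le_packPre ⟨⟨⟨?_, ?_⟩, ?_⟩, ?_⟩
  · exact forall_mem_range.2 hpos
  · rintro _ ⟨i, rfl⟩ _ ⟨j, rfl⟩ hne
    exact hsep i j (ne_of_apply_ne e hne)
  · exact forall_mem_range.2 hmem
  · exact forall_mem_range.2 hrad

lemma packPre_union_of_lt_dist (hsep : ∀ x ∈ A, ∀ y ∈ B, δ < dist x y) :
    packPre g Δ δ A + packPre g Δ δ B ≤ packPre g Δ δ (A ∪ B) := by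
  have hempty : ∀ C : Set X, IsScaledPacking Δ δ (∅ : Set (X × ℝ)) C := fun _ =>
    ⟨⟨⟨fun _ => False.elim, fun _ => False.elim⟩, fun _ => False.elim⟩, fun _ => False.elim⟩
  refine ENNReal.biSup_add_biSup_le' ⟨∅, hempty A⟩ ⟨∅, hempty B⟩ fun πA hA πB hB => ?_
  have hcross : ∀ p ∈ πA, ∀ q ∈ πB, p.2 < dist p.1 q.1 ∧ q.2 < dist q.1 p.1 := fun p hp q hq =>
    have hd := hsep _ (hA.1.2 p hp) _ (hB.1.2 q hq)
    ⟨(hA.2 p hp).2.trans_lt hd, (hB.2 q hq).2.trans_lt (dist_comm p.1 q.1 ▸ hd)⟩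
  have hdisj : Disjoint πA πB := disjoint_left.2 fun p hpA hpB => by
    simpa using (hcross p hpA p hpB).1.trans' (hA.1.1.1 p hpA)
  have hunion : IsScaledPacking Δ δ (πA ∪ πB) (A ∪ B) := by
    refine ⟨⟨⟨?_, ?_⟩, ?_⟩, ?_⟩
    · rintro p (hp | hp)
      exacts [hA.1.1.1 p hp, hB.1.1.1 p hp]
    · rintro p (hp | hp) q (hq | hq) hne
      exacts [hA.1.1.2 p hp q hq hne, (hcross p hp q hq).1, (hcross q hq p hp).2,
        hB.1.1.2 p hp q hq hne]
    · rintro p (hp | hp)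
      exacts [Or.inl (hA.1.2 p hp), Or.inr (hB.1.2 p hp)]
    · rintro p (hp | hp)
      exacts [hA.2 p hp, hB.2 p hp]
  calc packVal g πA + packVal g πB = packVal g (πA ∪ πB) :=
        (ENNReal.summable.tsum_union_disjoint (f := fun p : X × ℝ => ENNReal.ofReal (g p.2))
          hdisj ENNReal.summable).symm
    _ ≤ packPre g Δ δ (A ∪ B) := packVal_le_packPre hunion

lemma packPre0_union_of_areSeparated (hAB : Metric.AreSeparated A B) :
    packPre0 g Δ A + packPre0 g Δ B ≤ packPre0 g Δ (A ∪ B) := by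
  obtain ⟨r, hr, hrAB⟩ := hAB
  obtain ⟨ε, -, hε, hεr⟩ := ENNReal.lt_iff_exists_real_btwn.1 (pos_iff_ne_zero.2 hr)
  refine le_iInf₂ fun δ hδ => ?_
  have hδε : 0 < min δ ε := lt_min hδ (ENNReal.ofReal_pos.1 hε)
  have hsep : ∀ x ∈ A, ∀ y ∈ B, min δ ε < dist x y := fun x hx y hy => by
    have := (ENNReal.ofReal_le_ofReal (min_le_right δ ε)).trans_lt (hεr.trans_le (hrAB x hx y hy))
    rwa [edist_dist, ENNReal.ofReal_lt_ofReal_iff_of_nonneg hδε.le] at this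
  calc packPre0 g Δ A + packPre0 g Δ B
      ≤ packPre g Δ (min δ ε) A + packPre g Δ (min δ ε) B :=
        add_le_add (packPre0_le_packPre hδε) (packPre0_le_packPre hδε)
    _ ≤ packPre g Δ (min δ ε) (A ∪ B) := packPre_union_of_lt_dist hsep
    _ ≤ packPre g Δ δ (A ∪ B) := packPre_mono subset_rfl (min_le_left δ ε)

lemma exists_forall_mem_lt_dist_of_mem_closure {ι : Type*} [Finite ι] {x : ι → X} {r : ι → ℝ}
    (hx : ∀ i, x i ∈ closure A) (hsep : ∀ i j, i ≠ j → r i < dist (x i) (x j)) :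
    ∃ y : ι → X, (∀ i, y i ∈ A) ∧ ∀ i j, i ≠ j → r i < dist (y i) (y j) := by
  set U : Set (ι → X) := {y | ∀ i j, i ≠ j → r i < dist (y i) (y j)}
  have hU : IsOpen U := by
    simp only [U, ofPred_forall]
    exact isOpen_iInter_of_finite fun i => isOpen_iInter_of_finite fun j =>
      isOpen_iInter_of_finite fun _ => isOpen_lt continuous_const (by fun_prop)
  have hxA : x ∈ closure (univ.pi fun _ => A) := by
    rw [closure_pi_set]
    exact fun i _ => hx i
  obtain ⟨y, hyU, hyA⟩ := mem_closure_iff.1 hxA U hU hsep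
  exact ⟨y, fun i => hyA i (mem_univ i), hyU⟩

/-- Each finite part of a packing of `closure A` can be moved into `A`, since the packing
inequalities are strict. -/
lemma packPre_closure : packPre g Δ δ (closure A) = packPre g Δ δ A := by
  refine le_antisymm (iSup₂_le fun π hπ => ?_) (packPre_mono subset_closure le_rfl)
  rw [packVal, ENNReal.tsum_eq_iSup_sum]
  refine iSup_le fun t => ?_
  obtain ⟨y, hyA, hysep⟩ := exists_forall_mem_lt_dist_of_mem_closure (ι := t)
    (x := fun p => p.1.1.1) (r := fun p => p.1.1.2) (fun p => hπ.1.2 _ p.1.2)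
    fun p q hpq => hπ.1.1.2 _ p.1.2 _ q.1.2 fun h => hpq (Subtype.ext (Subtype.ext h))
  rw [← Finset.tsum_subtype t fun p => ENNReal.ofReal (g p.1.2)]
  exact tsum_ofReal_le_packPre (e := fun p : t => (y p, p.1.1.2)) (fun p => hπ.1.1.1 p.1.1 p.1.2)
    hysep hyA fun p => hπ.2 p.1.1 p.1.2

lemma packPre0_closure : packPre0 g Δ (closure A) = packPre0 g Δ A := by
  simp only [packPre0, packPre_closure]

variable (g Δ) in
noncomputable def packOuterMeasure : OuterMeasure X :=
  OuterMeasure.ofFunction (packPre0 g Δ) packPre0_empty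

lemma packMeasure_eq_packOuterMeasure (A : Set X) : packMeasure g Δ A = packOuterMeasure g Δ A :=
  (OuterMeasure.ofFunction_apply _ _ A).symm

lemma packMeasure_le_tsum {C : ℕ → Set X} (hC : A ⊆ ⋃ n, C n) :
    packMeasure g Δ A ≤ ∑' n, packPre0 g Δ (C n) :=
  iInf₂_le C hC

lemma packOuterMeasure_le_packPre0 (A : Set X) : packOuterMeasure g Δ A ≤ packPre0 g Δ A :=
  OuterMeasure.ofFunction_le A

lemma isMetric_packOuterMeasure : (packOuterMeasure g Δ : OuterMeasure X).IsMetric := by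
  intro A B hAB
  refine le_antisymm (measure_union_le A B) ?_
  rw [← packMeasure_eq_packOuterMeasure]
  refine le_iInf₂ fun C hC => ?_
  have hcover : ∀ D ⊆ A ∪ B, D ⊆ ⋃ n, C n ∩ D := fun D hD x hx => by
    obtain ⟨n, hn⟩ := mem_iUnion.1 (hC (hD hx))
    exact mem_iUnion.2 ⟨n, hn, hx⟩
  calc packOuterMeasure g Δ A + packOuterMeasure g Δ B
      ≤ (∑' n, packPre0 g Δ (C n ∩ A)) + ∑' n, packPre0 g Δ (C n ∩ B) := by
        rw [← packMeasure_eq_packOuterMeasure, ← packMeasure_eq_packOuterMeasure]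
        exact add_le_add (packMeasure_le_tsum (hcover A subset_union_left))
          (packMeasure_le_tsum (hcover B subset_union_right))
    _ = ∑' n, (packPre0 g Δ (C n ∩ A) + packPre0 g Δ (C n ∩ B)) := ENNReal.tsum_add.symm
    _ ≤ ∑' n, packPre0 g Δ (C n) := ENNReal.tsum_le_tsum fun n =>
        (packPre0_union_of_areSeparated (hAB.mono inter_subset_right inter_subset_right)).trans
          (packPre0_mono (union_subset inter_subset_left inter_subset_left))

lemma _root_.MeasureTheory.OuterMeasure.IsMetric.iUnion_closure_eq_iSup {μ : OuterMeasure X}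
    (hμ : μ.IsMetric) {A : ℕ → Set X} (hA : Monotone A) :
    μ (⋃ n, closure (A n)) = ⨆ n, μ (closure (A n)) := by
  let : MeasurableSpace X := borel X
  have : BorelSpace X := ⟨rfl⟩
  have hμm := hμ.borel_le_caratheodory
  have hmeas : ∀ n, MeasurableSet (closure (A n)) := fun n => isClosed_closure.measurableSet
  simp only [← toMeasure_apply μ hμm (hmeas _), ← toMeasure_apply μ hμm (.iUnion hmeas)]
  exact Monotone.measure_iUnion fun _ _ hnk => closure_mono (hA hnk)

lemma packMeasure_le_iSup_packPre0 {A : ℕ → Set X} (hA : Monotone A) {T : Set X}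
    (hT : T ⊆ ⋃ n, A n) : packMeasure g Δ T ≤ ⨆ n, packPre0 g Δ (A n) := by
  rw [packMeasure_eq_packOuterMeasure]
  calc packOuterMeasure g Δ T ≤ packOuterMeasure g Δ (⋃ n, closure (A n)) :=
        measure_mono (hT.trans (iUnion_mono fun n => subset_closure))
    _ = ⨆ n, packOuterMeasure g Δ (closure (A n)) :=
        isMetric_packOuterMeasure.iUnion_closure_eq_iSup hA
    _ ≤ ⨆ n, packPre0 g Δ (A n) := iSup_mono fun n =>
        (packOuterMeasure_le_packPre0 _).trans_eq packPre0_closure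

lemma exists_finset_of_lt_capacity_mul {T : Set Y} {r : ℝ} {c a : ℝ≥0∞}
    (h : c < capacity r T * a) :
    ∃ F : Finset Y, ↑F ⊆ T ∧ (∀ y ∈ F, ∀ z ∈ F, y ≠ z → r < dist y z) ∧ c < F.card * a := by
  simp only [capacity, ENNReal.iSup_mul, lt_iSup_iff] at h
  obtain ⟨F, ⟨hFT, hFsep⟩, hc⟩ := h
  exact ⟨F, hFT, hFsep, hc⟩

lemma packPre_mul_le_packPre_prod {E : Set (X × Y)} {S : Set X} {c : ℝ≥0∞}
    (hS : ∀ x ∈ S, ∀ r, 0 < r → r ≤ δ → c < capacity r (sect E x) * ENNReal.ofReal (g r)) :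
    packPre h Δ δ S * c ≤ packPre (fun r => g r * h r) Δ δ E := by
  simp only [packPre, ENNReal.iSup_mul]
  refine iSup₂_le fun π hπ => ?_
  choose F hFE hFsep hFc using fun p : π => exists_finset_of_lt_capacity_mul
    (hS p.1.1 (hπ.1.2 _ p.2) p.1.2 (hπ.1.1.1 _ p.2) (hπ.2 _ p.2).2)
  have hsep : ∀ i j : Σ p : π, F p, i ≠ j →
      i.1.1.2 < dist (i.1.1.1, i.2.1) (j.1.1.1, j.2.1) := by
    rintro ⟨p, y⟩ ⟨q, z⟩ hne
    rw [Prod.dist_eq]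
    by_cases hpq : p = q
    · subst hpq
      have hyz : y.1 ≠ z.1 := fun h => hne (by rw [Subtype.ext h])
      exact (hFsep p y y.2 z z.2 hyz).trans_le (le_max_right _ _)
    · exact (hπ.1.1.2 p p.2 q q.2 fun h => hpq (Subtype.ext h)).trans_le (le_max_left _ _)
  calc packVal h π * c = ∑' p : π, ENNReal.ofReal (h p.1.2) * c := ENNReal.tsum_mul_right.symm
    _ ≤ ∑' p : π, ∑' _ : F p, ENNReal.ofReal (g p.1.2 * h p.1.2) := by
        refine ENNReal.tsum_le_tsum fun p => ?_
        rw [tsum_fintype, Finset.sum_const, Finset.card_univ, Fintype.card_coe, nsmul_eq_mul]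
        calc ENNReal.ofReal (h p.1.2) * c
            ≤ ENNReal.ofReal (h p.1.2) * ((F p).card * ENNReal.ofReal (g p.1.2)) := by
              gcongr; exact (hFc p).le
          _ ≤ (F p).card * ENNReal.ofReal (g p.1.2 * h p.1.2) := by
              rw [mul_left_comm]
              gcongr
              rw [mul_comm]
              exact ENNReal.ofReal_mul_ofReal_le _ _
    _ = ∑' i : Σ p : π, F p, ENNReal.ofReal (g i.1.1.2 * h i.1.1.2) :=
        (ENNReal.tsum_sigma' (fun i : Σ p : π, F p => ENNReal.ofReal (g i.1.1.2 * h i.1.1.2))).symm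
    _ ≤ packPre (fun r => g r * h r) Δ δ E :=
        tsum_ofReal_le_packPre (e := fun i : Σ p : π, F p => ((i.1.1.1, i.2.1), i.1.1.2))
          (fun i => hπ.1.1.1 _ i.1.2) hsep (fun i => hFE i.1 i.2.2) fun i => hπ.2 _ i.1.2

lemma packPre0_mul_le_packPre0_prod {E : Set (X × Y)} {S : Set X} {c : ℝ≥0∞} (hδ : 0 < δ)
    (hS : ∀ x ∈ S, ∀ r, 0 < r → r ≤ δ → c < capacity r (sect E x) * ENNReal.ofReal (g r)) :
    packPre0 h Δ S * c ≤ packPre0 (fun r => g r * h r) Δ E := by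
  refine le_iInf₂ fun δ' hδ' => ?_
  calc packPre0 h Δ S * c ≤ packPre h Δ (min δ' δ) S * c := by
        gcongr; exact packPre0_le_packPre (lt_min hδ' hδ)
    _ ≤ packPre (fun r => g r * h r) Δ (min δ' δ) E := packPre_mul_le_packPre_prod
        fun x hx r hr hrδ => hS x hx r hr (hrδ.trans (min_le_right δ' δ))
    _ ≤ packPre (fun r => g r * h r) Δ δ' E := packPre_mono subset_rfl (min_le_left δ' δ)

end ZPaper

theorem stmt8_general {X Y : Type*} [MetricSpace X] [MetricSpace Y] (g h : ℝ → ℝ)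
    (Δ : Set ℝ) (E : Set (X × Y)) :
    packPre0 (fun r => g r * h r) Δ E ≥
      packMeasure h Δ (Set.univ : Set X) * ⨅ x : X, lboxPre0 g (sect E x) := by
  refine ENNReal.mul_le_of_forall_lt fun m hm c hc => ?_
  set S : ℕ → Set X := fun n =>
    {x | ∀ r : ℝ, 0 < r → r ≤ 1 / ((n : ℝ) + 1) → c < capacity r (sect E x) * ENNReal.ofReal (g r)}
  have hS_mono : Monotone S := fun n k hnk x hx r hr hrk =>
    hx r hr (hrk.trans (Nat.one_div_le_one_div hnk))
  have hS_cover : univ ⊆ ⋃ n, S n := fun x _ =>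
    mem_iUnion.2 (exists_nat_forall_lt_of_lt_liminf_nhdsGT (hc.trans_le (iInf_le _ x)))
  obtain ⟨n, hn⟩ := lt_iSup_iff.1 (hm.trans_le (packMeasure_le_iSup_packPre0 hS_mono hS_cover))
  calc m * c ≤ packPre0 h Δ (S n) * c := by gcongr
    _ ≤ packPre0 (fun r => g r * h r) Δ E :=
        packPre0_mul_le_packPre0_prod Nat.one_div_pos_of_nat fun _ hx => hx

/-- Lemma `lem:0-0`. For metric spaces `X`, `Y`, Hausdorff functions
`g`, `h`, a scale `Δ` and any `E ⊆ X × Y`,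
`pack^{gh}_{Δ,0}(E) ≥ pack^h_Δ(X) ⬝ inf_{x∈X} lboxm^g_0(E_x)`. -/
theorem stmt8 {X Y : Type*} [MetricSpace X] [MetricSpace Y] (g h : ℝ → ℝ)
    (hg : IsHausdorffFunction g) (hh : IsHausdorffFunction h)
    (Δ : Set ℝ) (hΔ : IsScale Δ) (E : Set (X × Y)) :
    packPre0 (fun r => g r * h r) Δ E ≥
      packMeasure h Δ (Set.univ : Set X) * ⨅ x : X, lboxPre0 g (sect E x) :=
  stmt8_general g h Δ E
end
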